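/- Let n ≥ 1, let K and K̂ be symmetric positive semidefinite n×n real matrices, let σ > 0, set A = K + σ²I, B = K̂ + σ²I, and C_M = ‖A⁻¹‖ · ‖B⁻¹‖. Let k, y ∈ ℝⁿ and k** ∈ ℝ be such that s² := k** − kᵀA⁻¹k ≥ 0 and s̃² := k** − kᵀB⁻¹k ≥ 0, and let β ≥ 0. Then |(kᵀA⁻¹y + β√(s²)) − (kᵀB⁻¹y + β√(s̃²))| ≤ ‖k‖ · ‖y‖ · C_M · ‖K − K̂‖ + β · ‖k‖ · √(C_M · ‖K − K̂‖). -/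

import Mathlib

open scoped Matrix

/-- The L2 operator norm (spectral norm) of a real square matrix. -/
noncomputable def l2OpNorm {n : ℕ} (M : Matrix (Fin n) (Fin n) ℝ) : ℝ :=
  ‖Matrix.toEuclideanCLM (𝕜 := ℝ) M‖

/-- The Euclidean norm of a vector in `ℝⁿ`. -/
noncomputable def euclNorm {n : ℕ} (v : Fin n → ℝ) : ℝ :=
  Real.sqrt (∑ i, v i ^ 2)

lemma euclNorm_eq {n : ℕ} (v : Fin n → ℝ) :
    euclNorm v = ‖(WithLp.equiv 2 (Fin n → ℝ)).symm v‖ := by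
  rw [EuclideanSpace.norm_eq, euclNorm]
  congr 1
  refine Finset.sum_congr rfl fun i _ => ?_
  rw [Real.norm_eq_abs, sq_abs]
  rfl

lemma l2OpNorm_nonneg {n : ℕ} (M : Matrix (Fin n) (Fin n) ℝ) : 0 ≤ l2OpNorm M :=
  norm_nonneg _

lemma euclNorm_nonneg {n : ℕ} (v : Fin n → ℝ) : 0 ≤ euclNorm v :=
  Real.sqrt_nonneg _

/-- Bilinear form bound. -/
lemma dot_mulVec_bound {n : ℕ} (M : Matrix (Fin n) (Fin n) ℝ) (u v : Fin n → ℝ) :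
    |u ⬝ᵥ (M *ᵥ v)| ≤ euclNorm u * l2OpNorm M * euclNorm v := by
  set u' := (WithLp.equiv 2 (Fin n → ℝ)).symm u with hu'
  set v' := (WithLp.equiv 2 (Fin n → ℝ)).symm v with hv'
  have key : u ⬝ᵥ (M *ᵥ v) = inner ℝ u' (Matrix.toEuclideanCLM (𝕜 := ℝ) M v') := by
    rw [hv', WithLp.equiv_symm_apply, Matrix.toEuclideanCLM_toLp]
    simp only [PiLp.inner_apply, RCLike.inner_apply, starRingEnd_apply, star_trivial]
    rw [dotProduct]
    refine Finset.sum_congr rfl fun i _ => ?_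
    simp [hu', Matrix.toLin'_apply, Matrix.mulVec, mul_comm]
  rw [key, euclNorm_eq, euclNorm_eq]
  calc |inner ℝ u' (Matrix.toEuclideanCLM (𝕜 := ℝ) M v')|
      ≤ ‖u'‖ * ‖Matrix.toEuclideanCLM (𝕜 := ℝ) M v'‖ := abs_real_inner_le_norm _ _
    _ ≤ ‖u'‖ * (‖Matrix.toEuclideanCLM (𝕜 := ℝ) M‖ * ‖v'‖) := by
        gcongr
        exact ContinuousLinearMap.le_opNorm _ _
    _ = ‖u'‖ * l2OpNorm M * ‖v'‖ := by rw [l2OpNorm]; ring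

lemma l2OpNorm_mul_le {n : ℕ} (M N : Matrix (Fin n) (Fin n) ℝ) :
    l2OpNorm (M * N) ≤ l2OpNorm M * l2OpNorm N := by
  rw [l2OpNorm, l2OpNorm, l2OpNorm, map_mul]
  exact norm_mul_le _ _

lemma l2OpNorm_sub_rev {n : ℕ} (M N : Matrix (Fin n) (Fin n) ℝ) :
    l2OpNorm (M - N) = l2OpNorm (N - M) := by
  rw [l2OpNorm, l2OpNorm, show N - M = -(M - N) by abel, map_neg, norm_neg]

lemma abs_sqrt_sub_sqrt_le {a b : ℝ} (ha : 0 ≤ a) (hb : 0 ≤ b) :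
    |Real.sqrt a - Real.sqrt b| ≤ Real.sqrt |a - b| := by
  have key : ∀ x y : ℝ, 0 ≤ x → 0 ≤ y → y ≤ x →
      Real.sqrt x - Real.sqrt y ≤ Real.sqrt (x - y) := by
    intro x y hx hy hyx
    have h1 : Real.sqrt x ≤ Real.sqrt (x - y) + Real.sqrt y := by
      have h2 : x ≤ (Real.sqrt (x - y) + Real.sqrt y) ^ 2 := by
        have := Real.sq_sqrt (sub_nonneg.2 hyx)
        have := Real.sq_sqrt hy
        have := Real.sqrt_nonneg (x - y)
        have := Real.sqrt_nonneg y
        nlinarith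
      calc Real.sqrt x ≤ Real.sqrt ((Real.sqrt (x - y) + Real.sqrt y) ^ 2) :=
            Real.sqrt_le_sqrt h2
        _ = Real.sqrt (x - y) + Real.sqrt y := by
            rw [Real.sqrt_sq (by positivity)]
    linarith
  rcases le_total b a with h | h
  · rw [abs_of_nonneg (sub_nonneg.2 (Real.sqrt_le_sqrt h)),
      abs_of_nonneg (sub_nonneg.2 h)]
    exact key a b ha hb h
  · rw [abs_of_nonpos (sub_nonpos.2 (Real.sqrt_le_sqrt h)),
      abs_of_nonpos (sub_nonpos.2 h), neg_sub, neg_sub]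
    exact key b a hb ha h

/-- UCB error bound under the subset-fitted GP approximation:
with `A = K + σ²I`, `B = K̂ + σ²I`, `C_M = ‖A⁻¹‖‖B⁻¹‖`, `s² = k** − kᵀA⁻¹k ≥ 0`,
`s̃² = k** − kᵀB⁻¹k ≥ 0`, and `β ≥ 0`, one has
`|(kᵀA⁻¹y + β√(s²)) − (kᵀB⁻¹y + β√(s̃²))| ≤ ‖k‖‖y‖ C_M ‖K − K̂‖ + β‖k‖√(C_M ‖K − K̂‖)`. -/
theorem stmt4 {n : ℕ} (hn : 1 ≤ n) (K Khat : Matrix (Fin n) (Fin n) ℝ)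
    (hK : K.PosSemidef) (hKhat : Khat.PosSemidef) (σ : ℝ) (hσ : 0 < σ)
    (k y : Fin n → ℝ) (kstar : ℝ)
    (hs : 0 ≤ kstar - k ⬝ᵥ ((K + σ ^ 2 • (1 : Matrix (Fin n) (Fin n) ℝ))⁻¹ *ᵥ k))
    (hs' : 0 ≤ kstar - k ⬝ᵥ ((Khat + σ ^ 2 • (1 : Matrix (Fin n) (Fin n) ℝ))⁻¹ *ᵥ k))
    (β : ℝ) (hβ : 0 ≤ β) :
    |(k ⬝ᵥ ((K + σ ^ 2 • (1 : Matrix (Fin n) (Fin n) ℝ))⁻¹ *ᵥ y) +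
          β * Real.sqrt (kstar - k ⬝ᵥ ((K + σ ^ 2 • (1 : Matrix (Fin n) (Fin n) ℝ))⁻¹ *ᵥ k))) -
        (k ⬝ᵥ ((Khat + σ ^ 2 • (1 : Matrix (Fin n) (Fin n) ℝ))⁻¹ *ᵥ y) +
          β * Real.sqrt (kstar - k ⬝ᵥ ((Khat + σ ^ 2 • (1 : Matrix (Fin n) (Fin n) ℝ))⁻¹ *ᵥ k)))| ≤
      euclNorm k * euclNorm y *
          (l2OpNorm ((K + σ ^ 2 • (1 : Matrix (Fin n) (Fin n) ℝ))⁻¹) *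
            l2OpNorm ((Khat + σ ^ 2 • (1 : Matrix (Fin n) (Fin n) ℝ))⁻¹)) *
          l2OpNorm (K - Khat) +
        β * euclNorm k *
          Real.sqrt
            ((l2OpNorm ((K + σ ^ 2 • (1 : Matrix (Fin n) (Fin n) ℝ))⁻¹) *
                l2OpNorm ((Khat + σ ^ 2 • (1 : Matrix (Fin n) (Fin n) ℝ))⁻¹)) *
              l2OpNorm (K - Khat)) := by
  set A := K + σ ^ 2 • (1 : Matrix (Fin n) (Fin n) ℝ) with hA
  set B := Khat + σ ^ 2 • (1 : Matrix (Fin n) (Fin n) ℝ) with hB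
  -- positive definiteness
  have hone : (σ ^ 2 • (1 : Matrix (Fin n) (Fin n) ℝ)).PosDef := by
    constructor
    · simp [Matrix.IsHermitian]
    · intro x hx
      exact (Matrix.PosDef.one.smul (pow_pos hσ 2)).2 hx
  have hApd : A.PosDef := Matrix.PosDef.posSemidef_add hK hone
  have hBpd : B.PosDef := Matrix.PosDef.posSemidef_add hKhat hone
  have hAu : IsUnit A := hApd.isUnit
  have hBu : IsUnit B := hBpd.isUnit
  have hAinv : A⁻¹ * A = 1 := Matrix.nonsing_inv_mul _ (Matrix.isUnit_iff_isUnit_det _ |>.1 hAu)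
  have hBinv : B * B⁻¹ = 1 := Matrix.mul_nonsing_inv _ (Matrix.isUnit_iff_isUnit_det _ |>.1 hBu)
  -- key matrix identity
  have hiden : A⁻¹ - B⁻¹ = A⁻¹ * (B - A) * B⁻¹ := by
    have : A⁻¹ * (B - A) * B⁻¹ = A⁻¹ * (B * B⁻¹) - (A⁻¹ * A) * B⁻¹ := by
      noncomm_ring
    rw [this, hAinv, hBinv, mul_one, one_mul]
  have hBA : B - A = -(K - Khat) := by rw [hA, hB]; abel
  set CM := l2OpNorm A⁻¹ * l2OpNorm B⁻¹ with hCM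
  set D := l2OpNorm (K - Khat) with hD
  have hDnn : 0 ≤ D := l2OpNorm_nonneg _
  have hCMnn : 0 ≤ CM := mul_nonneg (l2OpNorm_nonneg _) (l2OpNorm_nonneg _)
  -- bound on the norm of the difference of inverses
  have hdiff : l2OpNorm (A⁻¹ - B⁻¹) ≤ CM * D := by
    rw [hiden]
    calc l2OpNorm (A⁻¹ * (B - A) * B⁻¹)
        ≤ l2OpNorm (A⁻¹ * (B - A)) * l2OpNorm B⁻¹ := l2OpNorm_mul_le _ _
      _ ≤ l2OpNorm A⁻¹ * l2OpNorm (B - A) * l2OpNorm B⁻¹ := by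
          gcongr
          · exact l2OpNorm_nonneg _
          · exact l2OpNorm_mul_le _ _
      _ = CM * D := by
          rw [hBA, show l2OpNorm (-(K - Khat)) = D by
            rw [show -(K - Khat) = Khat - K by abel, l2OpNorm_sub_rev, ← hD]]
          rw [hCM]; ring
  have hknn := euclNorm_nonneg k
  have hynn := euclNorm_nonneg y
  -- mean term bound
  have hmean : |k ⬝ᵥ (A⁻¹ *ᵥ y) - k ⬝ᵥ (B⁻¹ *ᵥ y)| ≤ euclNorm k * euclNorm y * CM * D := by
    have h1 : k ⬝ᵥ (A⁻¹ *ᵥ y) - k ⬝ᵥ (B⁻¹ *ᵥ y) = k ⬝ᵥ ((A⁻¹ - B⁻¹) *ᵥ y) := by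
      rw [Matrix.sub_mulVec, dotProduct_sub]
    rw [h1]
    calc |k ⬝ᵥ ((A⁻¹ - B⁻¹) *ᵥ y)| ≤ euclNorm k * l2OpNorm (A⁻¹ - B⁻¹) * euclNorm y :=
          dot_mulVec_bound _ _ _
      _ ≤ euclNorm k * (CM * D) * euclNorm y := by gcongr
      _ = euclNorm k * euclNorm y * CM * D := by ring
  -- variance term bound
  have hvar : |Real.sqrt (kstar - k ⬝ᵥ (A⁻¹ *ᵥ k)) - Real.sqrt (kstar - k ⬝ᵥ (B⁻¹ *ᵥ k))|
      ≤ euclNorm k * Real.sqrt (CM * D) := by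
    have h2 : |(kstar - k ⬝ᵥ (A⁻¹ *ᵥ k)) - (kstar - k ⬝ᵥ (B⁻¹ *ᵥ k))|
        ≤ euclNorm k ^ 2 * (CM * D) := by
      have h1 : (kstar - k ⬝ᵥ (A⁻¹ *ᵥ k)) - (kstar - k ⬝ᵥ (B⁻¹ *ᵥ k))
          = -(k ⬝ᵥ ((A⁻¹ - B⁻¹) *ᵥ k)) := by
        rw [Matrix.sub_mulVec, dotProduct_sub]; ring
      rw [h1, abs_neg]
      calc |k ⬝ᵥ ((A⁻¹ - B⁻¹) *ᵥ k)| ≤ euclNorm k * l2OpNorm (A⁻¹ - B⁻¹) * euclNorm k :=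
            dot_mulVec_bound _ _ _
        _ ≤ euclNorm k * (CM * D) * euclNorm k := by gcongr
        _ = euclNorm k ^ 2 * (CM * D) := by ring
    calc |Real.sqrt (kstar - k ⬝ᵥ (A⁻¹ *ᵥ k)) - Real.sqrt (kstar - k ⬝ᵥ (B⁻¹ *ᵥ k))|
        ≤ Real.sqrt |(kstar - k ⬝ᵥ (A⁻¹ *ᵥ k)) - (kstar - k ⬝ᵥ (B⁻¹ *ᵥ k))| :=
          abs_sqrt_sub_sqrt_le hs hs'
      _ ≤ Real.sqrt (euclNorm k ^ 2 * (CM * D)) := Real.sqrt_le_sqrt h2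
      _ = euclNorm k * Real.sqrt (CM * D) := by
          rw [Real.sqrt_mul (by positivity), Real.sqrt_sq hknn]
  -- combine
  calc |(k ⬝ᵥ (A⁻¹ *ᵥ y) + β * Real.sqrt (kstar - k ⬝ᵥ (A⁻¹ *ᵥ k))) -
        (k ⬝ᵥ (B⁻¹ *ᵥ y) + β * Real.sqrt (kstar - k ⬝ᵥ (B⁻¹ *ᵥ k)))|
      ≤ |k ⬝ᵥ (A⁻¹ *ᵥ y) - k ⬝ᵥ (B⁻¹ *ᵥ y)| +
        |β * Real.sqrt (kstar - k ⬝ᵥ (A⁻¹ *ᵥ k)) - β * Real.sqrt (kstar - k ⬝ᵥ (B⁻¹ *ᵥ k))| := by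
        rw [show (k ⬝ᵥ (A⁻¹ *ᵥ y) + β * Real.sqrt (kstar - k ⬝ᵥ (A⁻¹ *ᵥ k))) -
            (k ⬝ᵥ (B⁻¹ *ᵥ y) + β * Real.sqrt (kstar - k ⬝ᵥ (B⁻¹ *ᵥ k))) =
            (k ⬝ᵥ (A⁻¹ *ᵥ y) - k ⬝ᵥ (B⁻¹ *ᵥ y)) +
            (β * Real.sqrt (kstar - k ⬝ᵥ (A⁻¹ *ᵥ k)) -
              β * Real.sqrt (kstar - k ⬝ᵥ (B⁻¹ *ᵥ k))) by ring]
        exact abs_add_le _ _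
    _ ≤ euclNorm k * euclNorm y * CM * D + β * (euclNorm k * Real.sqrt (CM * D)) := by
        gcongr
        rw [← mul_sub, abs_mul, abs_of_nonneg hβ]
        exact mul_le_mul_of_nonneg_left hvar hβ
    _ = euclNorm k * euclNorm y * CM * D + β * euclNorm k * Real.sqrt (CM * D) := by ring
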